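/- Let F : Xₙ × Xₙ → Xₙ be associative and quasitrivial with signature (n₁,…,n_k) (the sizes of the equivalence classes of ∼_F listed in increasing ≺_F-order). Then the stabilizer of F under the conjugation action of the symmetric group Sₙ has cardinality n₁!·n₂!·⋯·n_k!, and the orbit of F has cardinality n!/(n₁!·⋯·n_k!). -/

import Mathlib

def Assoc {X : Type*} (F : X → X → X) : Prop :=
  ∀ x y z, F (F x y) z = F x (F y z)

def Quasitrivial {X : Type*} (F : X → X → X) : Prop :=
  ∀ x y, F x y = x ∨ F x y = y

/-- The weak ordering associated with `F`: `x ≾_F y` iff `F x y = y` or `F y x = y`. -/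
def wle {X : Type*} (F : X → X → X) (x y : X) : Prop :=
  F x y = y ∨ F y x = y

/-- Symmetric part of `≾_F`. -/
def simF {X : Type*} (F : X → X → X) (x y : X) : Prop :=
  wle F x y ∧ wle F y x

/-- Strict (asymmetric) part of `≾_F`. -/
def sltF {X : Type*} (F : X → X → X) (x y : X) : Prop :=
  wle F x y ∧ ¬ wle F y x

/-- The σ-conjugate of `F`. -/
def conjOp {X : Type*} (σ : Equiv.Perm X) (F : X → X → X) : X → X → X :=
  fun x y => σ (F (σ.symm x) (σ.symm y))

/-!
An associative quasitrivial operation is determined by its weak ordering `≾_F` together with,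
on each `∼_F`-class, a choice of left or right projection; between two classes it returns the
element of the higher class. Hence a permutation fixing every class fixes `F`. Conversely an
automorphism of `F` preserves `≺_F`, hence the number of elements strictly below each point,
and that number determines the class of the point. So the stabilizer of `F` is the product of
the symmetric groups of the classes, and the orbit is counted by the orbit-stabilizer theorem.
-/

section Operation

variable {X : Type*} {F : X → X → X}

theorem Quasitrivial.apply_self (hQ : Quasitrivial F) (x : X) : F x x = x :=
  (hQ x x).elim id id

theorem Quasitrivial.eq_of_sltF (hQ : Quasitrivial F) {x y : X} (h : sltF F x y) :
    F x y = y ∧ F y x = y :=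
  ⟨(hQ x y).resolve_left fun h' => h.2 (Or.inr h'),
    (hQ y x).resolve_right fun h' => h.2 (Or.inl h')⟩

theorem wle.apply_swap_eq_right {a b : X} (hw : wle F a b) (hab : a ≠ b) (h : F a b = a) :
    F b a = b :=
  hw.resolve_left fun h' => hab (h.symm.trans h')

theorem Assoc.apply_eq_left_of_apply_eq_left (hA : Assoc F) (hQ : Quasitrivial F) {a b c : X}
    (hab : a ≠ b) (h : F a b = a) (hw : wle F a b) (hcb : wle F c b) : F b c = b := by
  refine hcb.elim (fun hcb => ?_) id
  rcases hQ b c with hbc | hbc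
  · exact hbc
  have hba := hw.apply_swap_eq_right hab h
  -- Now `F b c = c`; associativity on `(b, a, c)` or on `(a, c, b)` gives `c = b` or `b = a`.
  rcases hQ a c with hac | hac
  · have := hA b a c
    rw [hba, hac, hba, hbc] at this
    rw [hbc, this]
  · have := hA a c b
    rw [hac, hcb, h] at this
    exact absurd this.symm hab

theorem Assoc.eq_left_or_eq_right_of_simF (hA : Assoc F) (hQ : Quasitrivial F) {S : Set X}
    (hS : ∀ x ∈ S, ∀ y ∈ S, simF F x y) :
    (∀ x ∈ S, ∀ y ∈ S, F x y = x) ∨ (∀ x ∈ S, ∀ y ∈ S, F x y = y) := by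
  by_cases hleft : ∃ a ∈ S, ∃ b ∈ S, a ≠ b ∧ F a b = a
  · obtain ⟨a, ha, b, hb, hab, h⟩ := hleft
    have hbS : ∀ c ∈ S, F b c = b := fun c hc =>
      hA.apply_eq_left_of_apply_eq_left hQ hab h (hS a ha b hb).1 (hS c hc b hb).1
    refine Or.inl fun x hx y hy => ?_
    obtain rfl | hbx := eq_or_ne b x
    · exact hbS y hy
    exact hA.apply_eq_left_of_apply_eq_left hQ hbx (hbS x hx) (hS b hb x hx).1 (hS y hy x hx).1
  · push Not at hleft
    refine Or.inr fun x hx y hy => ?_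
    obtain rfl | hxy := eq_or_ne x y
    · exact hQ.apply_self x
    exact (hQ x y).resolve_left (hleft x hx y hy hxy)

theorem conjOp_eq_self_iff (σ : Equiv.Perm X) :
    conjOp σ F = F ↔ ∀ a b, σ (F a b) = F (σ a) (σ b) := by
  simp only [funext_iff, conjOp]
  exact ⟨fun h a b => by simpa using h (σ a) (σ b),
    fun h x y => by simpa using h (σ.symm x) (σ.symm y)⟩

theorem sltF_map_iff {σ : Equiv.Perm X} (hσ : conjOp σ F = F) (a b : X) :
    sltF F (σ a) (σ b) ↔ sltF F a b := by
  have hwle : ∀ a b, wle F (σ a) (σ b) ↔ wle F a b := fun a b => by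
    simp only [wle, ← (conjOp_eq_self_iff σ).1 hσ, σ.injective.eq_iff]
  simp only [sltF, hwle]

end Operation

/-- `σ` preserves the number of points strictly below a point, which is strictly monotone
in `f`. -/
theorem Equiv.Perm.comp_eq_of_forall_lt_iff {X ι : Type*} [Fintype X] [LinearOrder ι]
    (f : X → ι) (σ : Equiv.Perm X) (h : ∀ a b, f (σ a) < f (σ b) ↔ f a < f b) :
    f ∘ σ = f := by
  classical
  let rank : X → ℕ := fun x => (Finset.univ.filter fun y => f y < f x).card
  have rank_perm : ∀ x, rank (σ x) = rank x := fun x =>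
    (Finset.card_equiv σ fun y => by simp [h]).symm
  have rank_strictMono : ∀ x y, f x < f y → rank x < rank y := fun x y hxy =>
    Finset.card_lt_card <| (Finset.ssubset_iff_of_subset fun z hz => by
      simp only [Finset.mem_filter, Finset.mem_univ, true_and] at hz ⊢
      exact hz.trans hxy).2 ⟨x, by simp [hxy], by simp⟩
  funext x
  refine le_antisymm (not_lt.1 fun hlt => ?_) (not_lt.1 fun hlt => ?_)
  · exact (rank_strictMono _ _ hlt).ne (rank_perm x).symm
  · exact (rank_strictMono _ _ hlt).ne (rank_perm x)

section ClassIndex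

variable {X ι : Type*} [LinearOrder ι] {F : X → X → X} {idx : X → ι}
  (hsim : ∀ x y, simF F x y ↔ idx x = idx y) (hlt : ∀ x y, idx x < idx y → sltF F x y)

include hsim hlt

theorem sltF_iff_lt {x y : X} : sltF F x y ↔ idx x < idx y := by
  refine ⟨fun h => ?_, hlt x y⟩
  rcases lt_trichotomy (idx x) (idx y) with hxy | hxy | hxy
  · exact hxy
  · exact absurd ((hsim x y).2 hxy).2 h.2
  · exact absurd (hlt y x hxy).1 h.2

theorem conjOp_eq_self_of_comp_eq (hA : Assoc F) (hQ : Quasitrivial F) {σ : Equiv.Perm X}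
    (hσ : idx ∘ σ = idx) : conjOp σ F = F := by
  refine (conjOp_eq_self_iff σ).2 fun a b => ?_
  have hσ' : ∀ x, idx (σ x) = idx x := congrFun hσ
  rcases lt_trichotomy (idx a) (idx b) with hab | hab | hab
  · have hσab : idx (σ a) < idx (σ b) := by rwa [hσ', hσ']
    rw [(hQ.eq_of_sltF (hlt _ _ hab)).1, (hQ.eq_of_sltF (hlt _ _ hσab)).1]
  · have hclass : ∀ x ∈ {x | idx x = idx a}, ∀ y ∈ {x | idx x = idx a}, simF F x y :=
      fun x hx y hy => (hsim x y).2 (hx.trans hy.symm)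
    rcases hA.eq_left_or_eq_right_of_simF hQ hclass with hproj | hproj <;>
      rw [hproj a rfl b hab.symm, hproj (σ a) (hσ' a) (σ b) ((hσ' b).trans hab.symm)]
  · have hσba : idx (σ b) < idx (σ a) := by rwa [hσ', hσ']
    rw [(hQ.eq_of_sltF (hlt _ _ hab)).2, (hQ.eq_of_sltF (hlt _ _ hσba)).2]

theorem comp_eq_of_conjOp_eq_self [Fintype X] {σ : Equiv.Perm X} (hσ : conjOp σ F = F) :
    idx ∘ σ = idx :=
  σ.comp_eq_of_forall_lt_iff idx fun a b => by
    rw [← sltF_iff_lt hsim hlt, ← sltF_iff_lt hsim hlt, sltF_map_iff hσ]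

theorem conjOp_eq_self_iff_comp_eq [Fintype X] (hA : Assoc F) (hQ : Quasitrivial F)
    (σ : Equiv.Perm X) : conjOp σ F = F ↔ idx ∘ σ = idx :=
  ⟨comp_eq_of_conjOp_eq_self hsim hlt, conjOp_eq_self_of_comp_eq hsim hlt hA hQ⟩

end ClassIndex

theorem exists_classIndex {X ι : Type*} [LinearOrder ι] {F : X → X → X} (hQ : Quasitrivial F)
    {C : ι → Finset X} (hcover : ∀ x, ∃ i, x ∈ C i)
    (hclass : ∀ i, ∀ x ∈ C i, ∀ y, y ∈ C i ↔ simF F x y)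
    (horder : ∀ i j, i < j → ∀ x ∈ C i, ∀ y ∈ C j, sltF F x y) :
    ∃ idx : X → ι, (∀ x y, simF F x y ↔ idx x = idx y) ∧
      (∀ x y, idx x < idx y → sltF F x y) ∧ ∀ i x, x ∈ C i ↔ idx x = i := by
  choose idx hidx using hcover
  have hmem : ∀ i x, x ∈ C i ↔ idx x = i := by
    refine fun i x => ⟨fun hx => ?_, fun hx => hx ▸ hidx x⟩
    have hxx : wle F x x := Or.inl (hQ.apply_self x)
    rcases lt_trichotomy (idx x) i with h | h | h
    · exact absurd hxx (horder _ _ h x (hidx x) x hx).2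
    · exact h
    · exact absurd hxx (horder _ _ h x hx x (hidx x)).2
  refine ⟨idx, fun x y => ?_, fun x y h => horder _ _ h x (hidx x) y (hidx y), hmem⟩
  rw [← hclass _ x (hidx x) y, hmem, eq_comm]

/-- Not an instance: `X → X → X` already carries the pointwise action of `Equiv.Perm X`. -/
abbrev conjAction (X : Type*) : MulAction (Equiv.Perm X) (X → X → X) where
  smul := conjOp
  one_smul _ := rfl
  mul_smul _ _ _ := rfl

theorem card_orbit_mul_card_stabilizer_conjOp {X : Type*} [Fintype X] [DecidableEq X]
    (F : X → X → X) :
    Nat.card {G : X → X → X // ∃ σ : Equiv.Perm X, G = conjOp σ F} *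
      Nat.card {σ : Equiv.Perm X // conjOp σ F = F} = (Fintype.card X).factorial := by
  let := conjAction X
  rw [← Fintype.card_perm, ← Nat.card_eq_fintype_card,
    ← Nat.card_congr (MulAction.orbitProdStabilizerEquivGroup (Equiv.Perm X) F), Nat.card_prod]
  congr 1
  exact Nat.card_congr <| Equiv.subtypeEquivRight fun G => exists_congr fun σ => eq_comm

theorem stmt_8_general {n : ℕ} (F : Fin n → Fin n → Fin n)
    (hA : Assoc F) (hQ : Quasitrivial F)
    (k : ℕ) (C : Fin k → Finset (Fin n))
    -- the `C i` are the equivalence classes of `∼_F`, listed in increasing `≺_F`-order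
    (hcover : ∀ x : Fin n, ∃ i, x ∈ C i)
    (hclass : ∀ i, ∀ x ∈ C i, ∀ y : Fin n, y ∈ C i ↔ simF F x y)
    (horder : ∀ i j : Fin k, i < j → ∀ x ∈ C i, ∀ y ∈ C j, sltF F x y) :
    Nat.card {σ : Equiv.Perm (Fin n) // conjOp σ F = F} = ∏ i, Nat.factorial (C i).card ∧
      Nat.card {G : Fin n → Fin n → Fin n // ∃ σ : Equiv.Perm (Fin n), G = conjOp σ F}
        = Nat.factorial n / ∏ i, Nat.factorial (C i).card := by
  obtain ⟨idx, hsim, hlt, hmem⟩ := exists_classIndex hQ hcover hclass horder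
  have hstab : Nat.card {σ : Equiv.Perm (Fin n) // conjOp σ F = F}
      = ∏ i, Nat.factorial (C i).card := by
    rw [Nat.card_congr (Equiv.subtypeEquivRight (conjOp_eq_self_iff_comp_eq hsim hlt hA hQ)),
      Nat.card_eq_fintype_card, DomMulAct.stabilizer_card]
    refine Finset.prod_congr rfl fun i _ => ?_
    rw [Fintype.card_congr (Equiv.subtypeEquivRight fun x => (hmem i x).symm), Fintype.card_coe]
  refine ⟨hstab, ?_⟩
  have horbit := card_orbit_mul_card_stabilizer_conjOp F
  rw [hstab, Fintype.card_fin] at horbit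
  exact Nat.eq_div_of_mul_eq_left (by positivity) horbit

theorem stmt_8 {n : ℕ} (F : Fin n → Fin n → Fin n)
    (hA : Assoc F) (hQ : Quasitrivial F)
    (k : ℕ) (C : Fin k → Finset (Fin n))
    -- the `C i` are the equivalence classes of `∼_F`, listed in increasing `≺_F`-order
    (hne : ∀ i, (C i).Nonempty)
    (hcover : ∀ x : Fin n, ∃ i, x ∈ C i)
    (hclass : ∀ i, ∀ x ∈ C i, ∀ y : Fin n, y ∈ C i ↔ simF F x y)
    (horder : ∀ i j : Fin k, i < j → ∀ x ∈ C i, ∀ y ∈ C j, sltF F x y) :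
    Nat.card {σ : Equiv.Perm (Fin n) // conjOp σ F = F} = ∏ i, Nat.factorial (C i).card ∧
      Nat.card {G : Fin n → Fin n → Fin n // ∃ σ : Equiv.Perm (Fin n), G = conjOp σ F}
        = Nat.factorial n / ∏ i, Nat.factorial (C i).card :=
  stmt_8_general F hA hQ k C hcover hclass horder
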